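/- Let f satisfy the growth condition with exponent λ ∈ (0, 1). Then, as ε → 0⁺, the quantity 2·ln((f⁻¹)'(1/ε)/ε) equals (2λ/(1−λ))·ln(ln(1/ε)) + O(1); consequently, √(2·ln((f⁻¹)'(1/ε)/ε)) ~ √((2λ/(1−λ))·ln(ln(1/ε))) as ε → 0⁺ (i.e., the ratio of the two sides tends to 1). -/

import Mathlib

open Filter Set Topology

/-- The growth condition with exponent `lam` on the ray `[x₀, ∞)`. -/
def GrowthCondition (f : ℝ → ℝ) (lam x₀ : ℝ) : Prop :=
  (∀ x ∈ Set.Ici x₀, DifferentiableAt ℝ f x) ∧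
  (∀ x ∈ Set.Ici x₀, DifferentiableAt ℝ (deriv f) x) ∧
  StrictMonoOn f (Set.Ici x₀) ∧
  Filter.Tendsto f Filter.atTop Filter.atTop ∧
  (∀ x ∈ Set.Ici x₀, 0 < deriv f x) ∧
  ∃ c₁ c₂ : ℝ, 0 < c₁ ∧ c₁ ≤ c₂ ∧
    ∀ᶠ x in Filter.atTop,
      c₁ * x ^ (-lam) ≤ deriv (deriv f) x / deriv f x ∧
      deriv (deriv f) x / deriv f x ≤ c₂ * x ^ (-lam)

/-- `g` is a (two-sided) inverse of `f` relative to the ray `[x₀, ∞)`. -/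
def IsInverseOn (f g : ℝ → ℝ) (x₀ : ℝ) : Prop :=
  (∀ x ∈ Set.Ici x₀, g (f x) = x) ∧ (∀ y ∈ Set.Ici (f x₀), f (g y) = y)

/-!
Write `L = log f'`. The hypothesis says `L' ≍ x^(-λ)`, so integrating gives `L ≍ x^(1-λ)`;
similarly `(x^λ f')' ≍ f'` gives `x^λ f' ≍ f`. Hence `log (f / f') = λ log x + O(1)`, and
`log f = L + λ log x + O(1) ≍ x^(1-λ)`, so `log log f = (1-λ) log x + O(1)`. Eliminating `log x`,
`2 log (f / f') = 2λ/(1-λ) · log log f + O(1)` as `x → ∞`. At `x = f⁻¹(1/ε)` one has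
`(f⁻¹)'(1/ε)/ε = f x / f' x` and `log log (1/ε) = log log (f x)`, which gives the first claim; the
second follows since `log log (1/ε) → ∞`.
-/

open Asymptotics Real

lemma exists_le_add_of_hasDerivAt_le {u v u' v' : ℝ → ℝ}
    (hu : ∀ᶠ x in atTop, HasDerivAt u (u' x) x) (hv : ∀ᶠ x in atTop, HasDerivAt v (v' x) x)
    (huv : ∀ᶠ x in atTop, u' x ≤ v' x) : ∃ C, ∀ᶠ x in atTop, u x ≤ v x + C := by
  obtain ⟨X, hX⟩ := eventually_atTop.1 (hu.and (hv.and huv))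
  have hmono : MonotoneOn (v - u) (Ici X) := by
    refine monotoneOn_of_hasDerivWithinAt_nonneg (f' := v' - u') (convex_Ici X)
      (fun x hx => ((hX x hx).2.1.sub (hX x hx).1).continuousAt.continuousWithinAt) ?_ ?_
    · rw [interior_Ici]
      exact fun x hx => ((hX x hx.le).2.1.sub (hX x hx.le).1).hasDerivWithinAt
    · rw [interior_Ici]
      exact fun x hx => sub_nonneg.2 (hX x hx.le).2.2
  refine ⟨u X - v X, (eventually_ge_atTop X).mono fun x hx => ?_⟩
  have := hmono self_mem_Ici hx hx
  simp only [Pi.sub_apply] at this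
  linarith

lemma isTheta_of_hasDerivAt_of_le {u v u' v' : ℝ → ℝ} {c₁ c₂ : ℝ} (hc₁ : 0 < c₁)
    (hu : ∀ᶠ x in atTop, HasDerivAt u (u' x) x) (hv : ∀ᶠ x in atTop, HasDerivAt v (v' x) x)
    (hlow : ∀ᶠ x in atTop, c₁ * v' x ≤ u' x) (hupp : ∀ᶠ x in atTop, u' x ≤ c₂ * v' x)
    (hv_top : Tendsto v atTop atTop) : u =Θ[atTop] v := by
  obtain ⟨C₁, hC₁⟩ := exists_le_add_of_hasDerivAt_le (hv.mono fun _ h => h.const_mul c₁) hu hlow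
  obtain ⟨C₂, hC₂⟩ := exists_le_add_of_hasDerivAt_le hu (hv.mono fun _ h => h.const_mul c₂) hupp
  have hbounds : ∀ᶠ x in atTop,
      0 ≤ v x ∧ 0 ≤ u x ∧ c₁ / 2 * v x ≤ u x ∧ u x ≤ (|c₂| + 1) * v x := by
    filter_upwards [hC₁, hC₂, hv_top.eventually_ge_atTop (2 * |C₁| / c₁),
      hv_top.eventually_ge_atTop |C₂|] with x h₁ h₂ hv₁ hv₂
    rw [div_le_iff₀ hc₁] at hv₁
    have hv₀ : 0 ≤ v x := (abs_nonneg C₂).trans hv₂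
    have : c₂ * v x ≤ |c₂| * v x := mul_le_mul_of_nonneg_right (le_abs_self c₂) hv₀
    refine ⟨hv₀, ?_, ?_, ?_⟩ <;> nlinarith [le_abs_self C₁, le_abs_self C₂]
  refine ⟨IsBigO.of_bound (|c₂| + 1) ?_, IsBigO.of_bound (2 / c₁) ?_⟩ <;>
    filter_upwards [hbounds] with x ⟨hv₀, hu₀, hlow, hupp⟩ <;>
    rw [norm_of_nonneg hv₀, norm_of_nonneg hu₀]
  · exact hupp
  · rw [div_mul_eq_mul_div, le_div_iff₀ hc₁]
    linarith

lemma isBigO_one_log_sub_log {α : Type*} {l : Filter α} {u v : α → ℝ} (h : u =Θ[l] v)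
    (hu : ∀ᶠ x in l, 0 < u x) (hv : ∀ᶠ x in l, 0 < v x) :
    (fun x => log (u x) - log (v x)) =O[l] fun _ => (1 : ℝ) := by
  obtain ⟨c, hc, huv⟩ := h.1.exists_pos
  obtain ⟨d, hd, hvu⟩ := h.2.exists_pos
  refine (isBigO_one_iff ℝ).2 (isBoundedUnder_of_eventually_le (a := |log c| + |log d|) ?_)
  filter_upwards [huv.bound, hvu.bound, hu, hv] with x hux hvx hux₀ hvx₀
  rw [norm_of_nonneg hux₀.le, norm_of_nonneg hvx₀.le] at hux hvx
  have h₁ := log_le_log hux₀ hux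
  have h₂ := log_le_log hvx₀ hvx
  rw [log_mul hc.ne' hvx₀.ne'] at h₁
  rw [log_mul hd.ne' hux₀.ne'] at h₂
  rw [norm_eq_abs, abs_le]
  constructor <;>
    linarith [le_abs_self (log c), le_abs_self (log d), abs_nonneg (log c), abs_nonneg (log d)]

lemma tendsto_sqrt_div_sqrt_of_isBigO_sub {α : Type*} {l : Filter α} {a b : α → ℝ}
    (h : (fun x => a x - b x) =O[l] fun _ => (1 : ℝ)) (hb : Tendsto b l atTop) :
    Tendsto (fun x => √(a x) / √(b x)) l (𝓝 1) := by
  have hequiv : a ~[l] b :=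
    h.trans_isLittleO (isLittleO_const_left.2 (Or.inr (tendsto_norm_atTop_atTop.comp hb)))
  have hratio := (isEquivalent_iff_tendsto_one (hb.eventually_ne_atTop 0)).1 hequiv
  have := (continuous_sqrt.tendsto 1).comp hratio
  rw [sqrt_one] at this
  refine this.congr' ?_
  filter_upwards [hb.eventually_ge_atTop 0] with x hx
  exact sqrt_div' _ hx

namespace GrowthCondition

variable {f : ℝ → ℝ} {lam x₀ : ℝ}

lemma isTheta_log_deriv (hf : GrowthCondition f lam x₀) (hlam : lam < 1) :
    (fun x => log (deriv f x)) =Θ[atTop] fun x => x ^ (1 - lam) := by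
  obtain ⟨-, hd₂, -, -, hpos, c₁, c₂, hc₁, -, hbounds⟩ := hf
  have hlam' : 0 < 1 - lam := sub_pos.2 hlam
  refine isTheta_of_hasDerivAt_of_le (u' := fun x => deriv (deriv f) x / deriv f x)
    (v' := fun x => (1 - lam) * x ^ (-lam)) (c₁ := c₁ / (1 - lam)) (c₂ := c₂ / (1 - lam))
    (div_pos hc₁ hlam') ?_ ?_ ?_ ?_ (tendsto_rpow_atTop hlam')
  · filter_upwards [eventually_ge_atTop x₀] with x hx
    exact (hd₂ x hx).hasDerivAt.log (hpos x hx).ne'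
  · filter_upwards [eventually_gt_atTop 0] with x hx
    simpa using hasDerivAt_rpow_const (p := 1 - lam) (Or.inl hx.ne')
  · filter_upwards [hbounds] with x hx
    calc c₁ / (1 - lam) * ((1 - lam) * x ^ (-lam)) = c₁ * x ^ (-lam) := by field_simp
      _ ≤ _ := hx.1
  · filter_upwards [hbounds] with x hx
    calc _ ≤ c₂ * x ^ (-lam) := hx.2
      _ = c₂ / (1 - lam) * ((1 - lam) * x ^ (-lam)) := by field_simp

lemma exists_bounds_rpow_mul_deriv_deriv (hf : GrowthCondition f lam x₀) :
    ∃ c₁ c₂, 0 < c₁ ∧ ∀ᶠ x in atTop,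
      c₁ * deriv f x ≤ x ^ lam * deriv (deriv f) x ∧
        x ^ lam * deriv (deriv f) x ≤ c₂ * deriv f x := by
  obtain ⟨-, -, -, -, hpos, c₁, c₂, hc₁, -, hbounds⟩ := hf
  refine ⟨c₁, c₂, hc₁, ?_⟩
  filter_upwards [hbounds, eventually_ge_atTop x₀, eventually_gt_atTop 0]
    with x ⟨hlow, hupp⟩ hx₀ hx
  have hxlam : 0 < x ^ lam := rpow_pos_of_pos hx lam
  rw [rpow_neg hx.le, ← div_eq_mul_inv, div_le_div_iff₀ hxlam (hpos x hx₀)] at hlow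
  rw [rpow_neg hx.le, ← div_eq_mul_inv, div_le_div_iff₀ (hpos x hx₀) hxlam] at hupp
  constructor <;> linarith

lemma isTheta_rpow_mul_deriv (hf : GrowthCondition f lam x₀) (hlam₀ : 0 ≤ lam)
    (hlam₁ : lam ≤ 1) : (fun x => x ^ lam * deriv f x) =Θ[atTop] f := by
  obtain ⟨c₁, c₂, hc₁, hbounds⟩ := hf.exists_bounds_rpow_mul_deriv_deriv
  obtain ⟨hd₁, hd₂, -, htop, hpos, -⟩ := hf
  refine isTheta_of_hasDerivAt_of_le (c₂ := lam + c₂)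
    (u' := fun x => lam * x ^ (lam - 1) * deriv f x + x ^ lam * deriv (deriv f) x)
    (v' := deriv f) hc₁ ?_ ?_ ?_ ?_ htop
  · filter_upwards [eventually_ge_atTop x₀, eventually_gt_atTop 0] with x hx₀ hx
    exact (hasDerivAt_rpow_const (Or.inl hx.ne')).mul (hd₂ x hx₀).hasDerivAt
  · filter_upwards [eventually_ge_atTop x₀] with x hx₀
    exact (hd₁ x hx₀).hasDerivAt
  · filter_upwards [hbounds, eventually_ge_atTop x₀, eventually_gt_atTop 0] with x hbd hx₀ hx
    have := hpos x hx₀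
    have : 0 ≤ lam * x ^ (lam - 1) * deriv f x := by positivity
    linarith [hbd.1]
  · filter_upwards [hbounds, eventually_ge_atTop x₀, eventually_ge_atTop 1] with x hbd hx₀ hx
    have := hpos x hx₀
    have : lam * x ^ (lam - 1) * deriv f x ≤ lam * 1 * deriv f x := by
      gcongr
      exact rpow_le_one_of_one_le_of_nonpos hx (by linarith)
    linarith [hbd.2]

lemma isBigO_log_div_deriv_sub (hf : GrowthCondition f lam x₀) (hlam₀ : 0 ≤ lam)
    (hlam₁ : lam ≤ 1) :
    (fun x => log (f x / deriv f x) - lam * log x) =O[atTop] fun _ => (1 : ℝ) := by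
  have hΘ := (hf.isTheta_rpow_mul_deriv hlam₀ hlam₁).symm
  obtain ⟨-, -, -, htop, hpos, -⟩ := hf
  refine (isBigO_one_log_sub_log hΘ (htop.eventually_gt_atTop 0) ?_).congr' ?_
    EventuallyEq.rfl <;>
    filter_upwards [eventually_ge_atTop x₀, eventually_gt_atTop 0,
      htop.eventually_gt_atTop 0] with x hx₀ hx hfx
  · exact mul_pos (rpow_pos_of_pos hx lam) (hpos x hx₀)
  · rw [log_div hfx.ne' (hpos x hx₀).ne', log_mul (rpow_pos_of_pos hx lam).ne' (hpos x hx₀).ne',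
      log_rpow hx]
    ring

lemma isBigO_log_log_sub (hf : GrowthCondition f lam x₀) (hlam₀ : 0 ≤ lam) (hlam₁ : lam < 1) :
    (fun x => log (log (f x)) - (1 - lam) * log x) =O[atTop] fun _ => (1 : ℝ) := by
  have hlam' : 0 < 1 - lam := sub_pos.2 hlam₁
  have hrpow_top : Tendsto (fun x : ℝ => x ^ (1 - lam)) atTop atTop := tendsto_rpow_atTop hlam'
  have hlog_deriv := hf.isTheta_log_deriv hlam₁
  have hlog_div := hf.isBigO_log_div_deriv_sub hlam₀ hlam₁.le
  obtain ⟨-, -, -, htop, hpos, -⟩ := hf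
  have hlog_f : (fun x => log (f x)) =Θ[atTop] fun x => x ^ (1 - lam) := by
    have hsmall : (fun x => (log (f x / deriv f x) - lam * log x) + lam * log x)
        =o[atTop] fun x => x ^ (1 - lam) :=
      (hlog_div.trans_isLittleO
        (isLittleO_const_left.2 (Or.inr (tendsto_norm_atTop_atTop.comp hrpow_top)))).add
        ((isLittleO_log_rpow_atTop hlam').const_mul_left lam)
    refine EventuallyEq.trans_isTheta ?_ (hlog_deriv.add_isLittleO hsmall)
    filter_upwards [eventually_ge_atTop x₀, htop.eventually_gt_atTop 0] with x hx₀ hfx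
    simp only [Pi.add_apply]
    rw [log_div hfx.ne' (hpos x hx₀).ne']
    ring
  refine (isBigO_one_log_sub_log hlog_f
    ((tendsto_log_atTop.comp htop).eventually_gt_atTop 0) ?_).congr' ?_ EventuallyEq.rfl <;>
    filter_upwards [eventually_gt_atTop 0] with x hx
  · exact rpow_pos_of_pos hx _
  · rw [log_rpow hx]

lemma isBigO_two_mul_log_div_deriv_sub (hf : GrowthCondition f lam x₀) (hlam₀ : 0 ≤ lam)
    (hlam₁ : lam < 1) :
    (fun x => 2 * log (f x / deriv f x) - 2 * lam / (1 - lam) * log (log (f x)))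
      =O[atTop] fun _ => (1 : ℝ) := by
  have hlam' : 1 - lam ≠ 0 := (sub_pos.2 hlam₁).ne'
  refine (((hf.isBigO_log_div_deriv_sub hlam₀ hlam₁.le).const_mul_left 2).sub
    ((hf.isBigO_log_log_sub hlam₀ hlam₁).const_mul_left (2 * lam / (1 - lam)))).congr_left
    fun x => ?_
  field_simp
  ring

end GrowthCondition

namespace IsInverseOn

variable {f g : ℝ → ℝ} {x₀ : ℝ}

lemma mapsTo (hg : IsInverseOn f g x₀) (hsurj : Ici (f x₀) ⊆ f '' Ici x₀) :
    MapsTo g (Ici (f x₀)) (Ici x₀) := by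
  intro y hy
  obtain ⟨x, hx, rfl⟩ := hsurj hy
  rwa [hg.1 x hx]

lemma monotoneOn (hg : IsInverseOn f g x₀) (hf : StrictMonoOn f (Ici x₀))
    (hsurj : Ici (f x₀) ⊆ f '' Ici x₀) : MonotoneOn g (Ici (f x₀)) := by
  rintro _ hy₁ _ hy₂ hle
  obtain ⟨x₁, hx₁, rfl⟩ := hsurj hy₁
  obtain ⟨x₂, hx₂, rfl⟩ := hsurj hy₂
  rw [hg.1 x₁ hx₁, hg.1 x₂ hx₂]
  exact (hf.le_iff_le hx₁ hx₂).1 hle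

lemma tendsto_atTop (hg : IsInverseOn f g x₀) (hf : StrictMonoOn f (Ici x₀))
    (hsurj : Ici (f x₀) ⊆ f '' Ici x₀) : Tendsto g atTop atTop := by
  refine tendsto_atTop_atTop.2 fun c => ⟨f (max c x₀), fun y hy => ?_⟩
  have hc : f x₀ ≤ f (max c x₀) :=
    hf.monotoneOn self_mem_Ici (le_max_right c x₀) (le_max_right c x₀)
  calc c ≤ max c x₀ := le_max_left c x₀
    _ = g (f (max c x₀)) := (hg.1 _ (le_max_right c x₀)).symm
    _ ≤ g y := hg.monotoneOn hf hsurj hc (hc.trans hy) hy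

lemma hasDerivAt (hg : IsInverseOn f g x₀) (hf : StrictMonoOn f (Ici x₀))
    (hsurj : Ici (f x₀) ⊆ f '' Ici x₀) {y f' : ℝ} (hy : f x₀ < y) (hd : HasDerivAt f f' (g y))
    (hf' : f' ≠ 0) : HasDerivAt g f'⁻¹ y := by
  have hgy : x₀ < g y := by
    refine (hg.mapsTo hsurj hy.le).lt_of_ne fun h => hy.ne ?_
    rw [h, hg.2 y hy.le]
  have himage : Ici x₀ ⊆ g '' Ici (f x₀) := fun x hx =>
    ⟨f x, hf.monotoneOn self_mem_Ici hx hx, hg.1 x hx⟩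
  refine hd.of_local_left_inverse ?_ hf' ?_
  · exact continuousAt_of_monotoneOn_of_image_mem_nhds (hg.monotoneOn hf hsurj)
      (Ici_mem_nhds hy) (mem_of_superset (Ici_mem_nhds hgy) himage)
  · filter_upwards [Ici_mem_nhds hy] with z hz
    exact hg.2 z hz

end IsInverseOn

/-- If `f` satisfies the growth condition with exponent `lam ∈ (0,1)`, then as `ε → 0⁺`,
`2·ln((f⁻¹)'(1/ε)/ε) = (2lam/(1-lam))·ln ln(1/ε) + O(1)`, and consequently
`√(2·ln((f⁻¹)'(1/ε)/ε)) ~ √((2lam/(1-lam))·ln ln(1/ε))`. -/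
theorem log_deriv_inv_asymp (f g : ℝ → ℝ) (lam x₀ : ℝ)
    (hlam : lam ∈ Set.Ioo (0 : ℝ) 1)
    (hf : GrowthCondition f lam x₀)
    (hg : IsInverseOn f g x₀) :
    (∃ M : ℝ, ∀ᶠ ε in 𝓝[>] (0 : ℝ),
        |2 * Real.log (deriv g (1 / ε) / ε) -
          (2 * lam / (1 - lam)) * Real.log (Real.log (1 / ε))| ≤ M) ∧
    Tendsto (fun ε : ℝ =>
        Real.sqrt (2 * Real.log (deriv g (1 / ε) / ε)) /
        Real.sqrt ((2 * lam / (1 - lam)) * Real.log (Real.log (1 / ε))))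
      (𝓝[>] (0 : ℝ)) (𝓝 1) := by
  obtain ⟨hlam₀, hlam₁⟩ := hlam
  have hbound_atTop := hf.isBigO_two_mul_log_div_deriv_sub hlam₀.le hlam₁
  obtain ⟨hd₁, -, hsm, htop, hpos, -⟩ := hf
  have hsurj : Ici (f x₀) ⊆ f '' Ici x₀ :=
    intermediate_value_Ici (fun x hx => (hd₁ x hx).continuousAt.continuousWithinAt) htop
  have hinv : Tendsto (fun ε : ℝ => 1 / ε) (𝓝[>] 0) atTop := by
    simpa only [one_div] using tendsto_inv_nhdsGT_zero
  have hbound : (fun ε : ℝ => 2 * log (deriv g (1 / ε) / ε) -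
      2 * lam / (1 - lam) * log (log (1 / ε))) =O[𝓝[>] 0] fun _ => (1 : ℝ) := by
    refine (hbound_atTop.comp_tendsto ((hg.tendsto_atTop hsm hsurj).comp hinv)).congr' ?_
      EventuallyEq.rfl
    filter_upwards [hinv.eventually (eventually_gt_atTop (f x₀))] with ε hε
    have hgε : x₀ ≤ g (1 / ε) := hg.mapsTo hsurj hε.le
    have hfg : f (g (1 / ε)) = 1 / ε := hg.2 _ hε.le
    have hderiv : deriv g (1 / ε) = (deriv f (g (1 / ε)))⁻¹ :=
      (hg.hasDerivAt hsm hsurj hε (hd₁ _ hgε).hasDerivAt (hpos _ hgε).ne').deriv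
    simp only [Function.comp_apply, hfg, hderiv]
    congr 3
    field_simp
  refine ⟨?_, tendsto_sqrt_div_sqrt_of_isBigO_sub hbound ?_⟩
  · obtain ⟨M, hM⟩ := ((isBigO_one_iff ℝ).1 hbound).eventually_le
    exact ⟨M, hM.mono fun ε h => by rwa [← norm_eq_abs]⟩
  · exact (tendsto_log_atTop.comp (tendsto_log_atTop.comp hinv)).const_mul_atTop
      (div_pos (by linarith) (by linarith))
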